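/- arXiv:2304.08093 — 2 statements merged into one kernel-verified Lean document; each statement's English description precedes it below -/
import Mathlib

section
/- Let K = (G, M, I) be a finite formal context with |G| = n ≥ 3. There exists a surjective scale-measure from K into the crown scale C_n if and only if ∅ ∈ Ext(K), {g} ∈ Ext(K) for every g ∈ G, and there is an enumeration g_1, …, g_n of G such that {g_i, g_{i+1}} ∈ Ext(K) for all 1 ≤ i < n and {g_n, g_1} ∈ Ext(K). -/
/-- The intent (common attributes) of a set of objects. -/
def intentOf {G M : Type*} (Inc : G → M → Prop) (A : Set G) : Set M :=
  {m | ∀ g ∈ A, Inc g m}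

/-- The extent (common objects) of a set of attributes. -/
def extentOf {G M : Type*} (Inc : G → M → Prop) (B : Set M) : Set G :=
  {g | ∀ m ∈ B, Inc g m}

/-- The set of extents of the formal context `(G, M, Inc)`. -/
def Extents {G M : Type*} (Inc : G → M → Prop) : Set (Set G) :=
  {A | extentOf Inc (intentOf Inc A) = A}

/-- The object closure operator `φ` of a formal context: `φ(A) = A''`. -/
def closureK {G M : Type*} (Inc : G → M → Prop) (A : Set G) : Set G :=
  extentOf Inc (intentOf Inc A)

/-- `σ` is a scale-measure from `(G,M,Inc)` into `(GS,MS,IncS)`. -/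
def IsScaleMeasure {G M GS MS : Type*} (Inc : G → M → Prop) (IncS : GS → MS → Prop)
    (σ : G → GS) : Prop :=
  ∀ A ∈ Extents IncS, σ ⁻¹' A ∈ Extents Inc

/-- `σ` is a full scale-measure from `(G,M,Inc)` into `(GS,MS,IncS)`. -/
def IsFullScaleMeasure {G M GS MS : Type*} (Inc : G → M → Prop) (IncS : GS → MS → Prop)
    (σ : G → GS) : Prop :=
  IsScaleMeasure Inc IncS σ ∧ Extents Inc = (fun A => σ ⁻¹' A) '' Extents IncS

/-- The incidence of the induced subcontext `K[H, M]`. -/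
def subInc {G M : Type*} (Inc : G → M → Prop) (H : Set G) : ↥H → M → Prop :=
  fun h m => Inc h.1 m

/-- `σ : H → GS` is a local full scale-measure from `K` into `S`, i.e. a full
scale-measure from `K[H,M]` into `S`. -/
def IsLocalFullScaleMeasure {G M GS MS : Type*} (Inc : G → M → Prop) (H : Set G)
    (IncS : GS → MS → Prop) (σ : ↥H → GS) : Prop :=
  IsFullScaleMeasure (subInc Inc H) IncS σ

/-- Nominal scale `N_n = ([n],[n],=)` (objects/attributes modelled by `Fin n`). -/
def nominalInc (n : ℕ) : Fin n → Fin n → Prop := fun a b => a = b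

/-- Contranominal scale `B_n = ([n],[n],≠)`. -/
def contranominalInc (n : ℕ) : Fin n → Fin n → Prop := fun a b => a ≠ b

/-- Ordinal scale `O_n = ([n],[n],≤)`. -/
def ordinalInc (n : ℕ) : Fin n → Fin n → Prop := fun a b => a ≤ b

/-- Interordinal scale `I_n = ([n],[n],≤) | ([n],[n],≥)`. -/
def interordinalInc (n : ℕ) : Fin n → Fin n ⊕ Fin n → Prop :=
  fun g m => Sum.elim (fun a => g ≤ a) (fun a => a ≤ g) m

/-- Crown scale `C_n = ([n],[n],J)` with `(a,b) ∈ J` iff `a = b`, `b = a+1`, or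
`(a,b) = (n,1)` (here `Fin n` is `0`-indexed, so `(n,1)` becomes `(n-1,0)`). -/
def crownInc (n : ℕ) : Fin n → Fin n → Prop :=
  fun a b => a = b ∨ (b : ℕ) = (a : ℕ) + 1 ∨ ((a : ℕ) = n - 1 ∧ (b : ℕ) = 0)

/-!
The extents of the crown `C_n`, `n ≥ 3`, are `univ` and the subsets of its edges `{a, a + 1}`
(with `a + 1 = finRotate n a` taken cyclically): the extent of the attribute `m` is the edge
`{m - 1, m}`, and two edges meet in a vertex or not at all. A surjection from an `n`-element set
onto `Fin n` is a bijection, so a surjective scale-measure into `C_n` is the inverse of an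
enumeration of `G` pulling back `∅`, the vertices and the edges to extents.
-/

open Set

section FormalContext

variable {G M : Type*} (Inc : G → M → Prop)

lemma subset_extentOf_intentOf (A : Set G) : A ⊆ extentOf Inc (intentOf Inc A) :=
  fun g hg _ hm => hm g hg

lemma extentOf_mem_extents (B : Set M) : extentOf Inc B ∈ Extents Inc :=
  Subset.antisymm (fun _ hg m hm => hg m fun _ hg' => hg' m hm) (subset_extentOf_intentOf Inc _)

lemma extentOf_empty : extentOf Inc (∅ : Set M) = univ := by
  ext; simp [extentOf]

lemma extentOf_union (B C : Set M) :
    extentOf Inc (B ∪ C) = extentOf Inc B ∩ extentOf Inc C := by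
  ext; simp [extentOf, or_imp, forall_and]

lemma univ_mem_extents : (univ : Set G) ∈ Extents Inc := by
  simpa only [extentOf_empty] using extentOf_mem_extents Inc ∅

variable {Inc}

lemma inter_mem_extents {A B : Set G} (hA : A ∈ Extents Inc) (hB : B ∈ Extents Inc) :
    A ∩ B ∈ Extents Inc := by
  rw [← hA, ← hB, ← extentOf_union]
  exact extentOf_mem_extents Inc _

lemma mem_extents_of_subset_pair {x y : G} (hempty : ∅ ∈ Extents Inc)
    (hx : {x} ∈ Extents Inc) (hy : {y} ∈ Extents Inc) (hxy : {x, y} ∈ Extents Inc)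
    {A : Set G} (hA : A ⊆ {x, y}) : A ∈ Extents Inc := by
  rcases subset_pair_iff_eq.1 hA with rfl | rfl | rfl | rfl <;> assumption

lemma eq_univ_or_subset_extentOf_singleton {A : Set G} (hA : A ∈ Extents Inc) :
    A = univ ∨ ∃ m, A ⊆ extentOf Inc {m} := by
  rcases (intentOf Inc A).eq_empty_or_nonempty with hB | ⟨m, hm⟩
  · left
    rw [← hA, hB, extentOf_empty]
  · right
    refine ⟨m, fun g hg => ?_⟩
    rw [← hA] at hg
    exact fun _ hm' => (mem_singleton_iff.1 hm') ▸ hg m hm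

end FormalContext

section Crown

variable {n : ℕ}

lemma crownInc_iff (a b : Fin n) : crownInc n a b ↔ b = a ∨ b = finRotate n a := by
  obtain _ | k := n
  · exact a.elim0
  · simp only [crownInc, Fin.ext_iff, coe_finRotate, Fin.val_last]
    split_ifs <;> omega

lemma finRotate_finRotate_ne (hn : 3 ≤ n) (a : Fin n) : finRotate n (finRotate n a) ≠ a := by
  obtain ⟨k, rfl⟩ : ∃ k, n = k + 1 := ⟨n - 1, by omega⟩
  simp only [ne_eq, Fin.ext_iff, coe_finRotate, Fin.val_last]
  split_ifs <;> omega

lemma extentOf_crownInc_singleton (m : Fin n) :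
    extentOf (crownInc n) {m} = {(finRotate n).symm m, m} := by
  ext g
  simp only [extentOf, mem_singleton_iff, forall_eq, mem_ofPred_eq, crownInc_iff, mem_insert_iff,
    Equiv.eq_symm_apply]
  tauto

lemma pair_finRotate_mem_extents_crownInc (a : Fin n) :
    {a, finRotate n a} ∈ Extents (crownInc n) := by
  simpa only [extentOf_crownInc_singleton, Equiv.symm_apply_apply] using
    extentOf_mem_extents (crownInc n) {finRotate n a}

lemma singleton_mem_extents_crownInc (hn : 3 ≤ n) (a : Fin n) :
    {a} ∈ Extents (crownInc n) := by
  have hne : (finRotate n).symm a ≠ finRotate n a := fun h =>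
    finRotate_finRotate_ne hn a (by rw [← h, Equiv.apply_symm_apply])
  have hinter : ({(finRotate n).symm a, a} ∩ {a, finRotate n a} : Set (Fin n)) = {a} := by
    ext g
    simp only [mem_inter_iff, mem_insert_iff, mem_singleton_iff]
    constructor
    · rintro ⟨h₁ | h₁, h₂ | h₂⟩ <;> first | assumption | exact absurd (h₁.symm.trans h₂) hne
    · rintro rfl
      simp
  rw [← hinter, ← extentOf_crownInc_singleton]
  exact inter_mem_extents (extentOf_mem_extents _ _) (pair_finRotate_mem_extents_crownInc a)

lemma empty_mem_extents_crownInc (hn : 3 ≤ n) : ∅ ∈ Extents (crownInc n) := by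
  let a : Fin n := ⟨0, by omega⟩
  have hdisj : ({a} ∩ {finRotate n (finRotate n a)} : Set (Fin n)) = ∅ := by
    simpa only [singleton_inter_eq_empty, mem_singleton_iff] using
      (finRotate_finRotate_ne hn a).symm
  rw [← hdisj]
  exact inter_mem_extents (singleton_mem_extents_crownInc hn _)
    (singleton_mem_extents_crownInc hn _)

lemma eq_univ_or_subset_pair_finRotate {A : Set (Fin n)} (hA : A ∈ Extents (crownInc n)) :
    A = univ ∨ ∃ a, A ⊆ {a, finRotate n a} := by
  refine (eq_univ_or_subset_extentOf_singleton hA).imp_right fun ⟨m, hm⟩ =>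
    ⟨(finRotate n).symm m, ?_⟩
  rwa [Equiv.apply_symm_apply, ← extentOf_crownInc_singleton]

end Crown

lemma isScaleMeasure_crownInc_symm_iff {G M : Type*} {Inc : G → M → Prop} {n : ℕ} (hn : 3 ≤ n)
    (e : Fin n ≃ G) :
    IsScaleMeasure Inc (crownInc n) e.symm ↔
      ∅ ∈ Extents Inc ∧ (∀ g, {g} ∈ Extents Inc) ∧
        ∀ a, {e a, e (finRotate n a)} ∈ Extents Inc := by
  simp only [IsScaleMeasure, ← Equiv.image_eq_preimage_symm]
  constructor
  · intro h
    refine ⟨?_, fun g => ?_, fun a => ?_⟩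
    · simpa using h ∅ (empty_mem_extents_crownInc hn)
    · simpa using h {e.symm g} (singleton_mem_extents_crownInc hn _)
    · simpa [image_pair] using h _ (pair_finRotate_mem_extents_crownInc a)
  · rintro ⟨hempty, hsingleton, hpair⟩ A hA
    rcases eq_univ_or_subset_pair_finRotate hA with rfl | ⟨a, hsub⟩
    · simpa using univ_mem_extents Inc
    · refine mem_extents_of_subset_pair hempty (hsingleton _) (hsingleton _) (hpair a) ?_
      simpa [image_pair] using image_mono (f := e) hsub

lemma forall_finRotate_iff {n : ℕ} (hn : 0 < n) {P : Fin n → Fin n → Prop} :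
    (∀ a, P a (finRotate n a)) ↔
      (∀ i, (h : i + 1 < n) → P ⟨i, by omega⟩ ⟨i + 1, h⟩) ∧ P ⟨n - 1, by omega⟩ ⟨0, hn⟩ := by
  obtain ⟨k, rfl⟩ : ∃ k, n = k + 1 := ⟨n - 1, by omega⟩
  constructor
  · intro h
    refine ⟨fun i hi => ?_, ?_⟩
    · simpa only [finRotate_of_lt (Nat.lt_of_succ_lt_succ hi)] using h ⟨i, by omega⟩
    · simpa only [Nat.add_sub_cancel, finRotate_last'] using h ⟨k, by omega⟩
  · rintro ⟨hsucc, hlast⟩ ⟨i, hi⟩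
    rcases Nat.lt_succ_iff_lt_or_eq.1 hi with hlt | rfl
    · rw [finRotate_of_lt hlt]
      exact hsucc i (by omega)
    · rw [finRotate_last']
      simpa only [Nat.add_sub_cancel] using hlast

/-- Characterisation of surjective scale-measures into the crown scale. -/
theorem stmt4 {G M : Type*} [Finite G] (Inc : G → M → Prop)
    {n : ℕ} (hn : 3 ≤ n) (hcard : Nat.card G = n) :
    (∃ σ : G → Fin n, Function.Surjective σ ∧ IsScaleMeasure Inc (crownInc n) σ) ↔
      (∅ ∈ Extents Inc ∧ (∀ g : G, ({g} : Set G) ∈ Extents Inc) ∧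
        ∃ e : Fin n ≃ G,
          (∀ i : ℕ, (h : i + 1 < n) →
            ({e ⟨i, by omega⟩, e ⟨i + 1, h⟩} : Set G) ∈ Extents Inc) ∧
          ({e ⟨n - 1, by omega⟩, e ⟨0, by omega⟩} : Set G) ∈ Extents Inc) := by
  have hcycle (e : Fin n ≃ G) := forall_finRotate_iff (by omega)
    (P := fun a b => ({e a, e b} : Set G) ∈ Extents Inc)
  constructor
  · rintro ⟨σ, hsurj, hσ⟩
    let e := (Equiv.ofBijective σ (hsurj.bijective_of_nat_card_le (by simp [hcard]))).symm
    obtain ⟨hempty, hsingleton, hpair⟩ := (isScaleMeasure_crownInc_symm_iff hn e).1 hσ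
    exact ⟨hempty, hsingleton, e, (hcycle e).1 hpair⟩
  · rintro ⟨hempty, hsingleton, e, hcycle_edges⟩
    exact ⟨e.symm, e.symm.surjective,
      (isScaleMeasure_crownInc_symm_iff hn e).2 ⟨hempty, hsingleton, (hcycle e).2 hcycle_edges⟩⟩
end

section
/- Let K = (G, M, I) be a finite formal context and H ⊆ G with |H| = n ≥ 2. If there exists a bijective local full scale-measure σ : H → [n] from K into the interordinal scale I_n, then for every H' ⊆ H with |H'| = k ≥ 2 there exists a bijective local full scale-measure from K (with domain H') into the interordinal scale I_k. -/
/-!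
A full scale-measure is determined by the extents it pulls back. Restricting `σ` to `H'` pulls
back the same extents along the inclusion `H' → H`, and the extents of `I_n` are exactly the
order-connected subsets of `[n]`. Relabelling the image `σ(H') ⊆ [n]` increasingly by `[k]` gives
a bijection `τ : H' → [k]` with `σ|H' = e ∘ τ` for an order embedding `e : [k] → [n]`, and
preimages under `e` of order-connected sets of `[n]` are exactly the order-connected sets of `[k]`.
-/

open Set Function

section Extents

variable {G G' M GS GT MS MT : Type*} (Inc : G → M → Prop)

lemma closureK_mem_extents (A : Set G) : closureK Inc A ∈ Extents Inc :=
  Subset.antisymm (fun _ hg m hm => hg m fun _ hx => hx m hm) fun _ hg _ hm => hm _ hg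

lemma extents_comap (f : G' → G) :
    Extents (fun x m => Inc (f x) m) = (f ⁻¹' ·) '' Extents Inc := by
  have intent_image (A : Set G') :
      intentOf Inc (f '' A) = intentOf (fun x m => Inc (f x) m) A := by
    ext m
    simp [intentOf]
  ext A
  constructor
  · intro hA
    exact ⟨closureK Inc (f '' A), closureK_mem_extents Inc _, by
      rw [closureK, intent_image]
      exact hA⟩
  · rintro ⟨B, hB, rfl⟩
    refine Subset.antisymm (fun x hx => ?_) fun x hx m hm => hm x hx
    show f x ∈ B
    rw [← hB]
    exact fun m hm => hx m fun y hy => hm _ hy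

lemma isFullScaleMeasure_iff {IncS : GS → MS → Prop} {σ : G → GS} :
    IsFullScaleMeasure Inc IncS σ ↔ Extents Inc = (σ ⁻¹' ·) '' Extents IncS :=
  ⟨And.right, fun h => ⟨fun _ hA => h ▸ mem_image_of_mem _ hA, h⟩⟩

variable {Inc}

lemma IsFullScaleMeasure.of_comp {IncS : GS → MS → Prop} {IncT : GT → MT → Prop}
    {τ : G → GT} {e : GT → GS}
    (he : Extents IncT = (e ⁻¹' ·) '' Extents IncS)
    (h : IsFullScaleMeasure Inc IncS (e ∘ τ)) : IsFullScaleMeasure Inc IncT τ := by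
  rw [isFullScaleMeasure_iff] at h ⊢
  rw [h, he, image_image]
  rfl

lemma IsLocalFullScaleMeasure.restrict {IncS : GS → MS → Prop}
    {H H' : Set G} {σ : H → GS} (h : IsLocalFullScaleMeasure Inc H IncS σ) (hsub : H' ⊆ H) :
    IsLocalFullScaleMeasure Inc H' IncS (σ ∘ inclusion hsub) := by
  rw [IsLocalFullScaleMeasure, isFullScaleMeasure_iff] at h ⊢
  rw [show subInc Inc H' = fun x m => subInc Inc H (inclusion hsub x) m from rfl,
    extents_comap, h, image_image]
  rfl

end Extents

lemma Set.OrdConnected.exists_eq_Icc {α : Type*} [LinearOrder α] [Finite α] [Nontrivial α]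
    {S : Set α} (hS : S.OrdConnected) : ∃ a b, S = Icc a b := by
  rcases S.eq_empty_or_nonempty with rfl | hne
  · obtain ⟨a, b, hab⟩ := exists_pair_lt α
    exact ⟨b, a, (Icc_eq_empty hab.not_ge).symm⟩
  · obtain ⟨a, haS, ha⟩ := exists_min_image S id S.toFinite hne
    obtain ⟨b, hbS, hb⟩ := exists_max_image S id S.toFinite hne
    exact ⟨a, b, Subset.antisymm (fun x hx => ⟨ha x hx, hb x hx⟩) (hS.out haS hbS)⟩

lemma OrderEmbedding.image_preimage_ordConnected {α β : Type*} [LinearOrder α] [Finite α]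
    [Nontrivial α] [Preorder β] (e : α ↪o β) :
    (e ⁻¹' ·) '' {S : Set β | S.OrdConnected} = {S | S.OrdConnected} := by
  ext S
  constructor
  · rintro ⟨C, hC, rfl⟩
    exact hC.preimage_mono e.monotone
  · intro hS
    obtain ⟨a, b, rfl⟩ := hS.exists_eq_Icc
    exact ⟨Icc (e a) (e b), ordConnected_Icc, e.preimage_Icc a b⟩

lemma exists_equiv_fin_orderEmbedding {ι α : Type*} [LinearOrder α] [Finite α] {k : ℕ}
    (f : ι → α) (hf : Injective f) (hk : Nat.card ι = k) :
    ∃ (τ : ι ≃ Fin k) (e : Fin k ↪o α), ∀ x, e (τ x) = f x := by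
  classical
  have := Fintype.ofFinite (range f)
  let τ₀ := Equiv.ofInjective f hf
  have hcard : Fintype.card (range f) = k := by
    rw [Fintype.card_eq_nat_card, ← Nat.card_congr τ₀, hk]
  let iso := Fintype.orderIsoFinOfCardEq (range f) hcard
  exact ⟨τ₀.trans iso.symm.toEquiv, iso.toOrderEmbedding.trans (OrderEmbedding.subtype _),
    fun x => by simp [τ₀]⟩

lemma interordinalInc_Icc_mem_extents {n : ℕ} (a b : Fin n) :
    Icc a b ∈ Extents (interordinalInc n) :=
  Subset.antisymm (fun _ hg => ⟨hg (.inr a) fun _ hx => hx.1, hg (.inl b) fun _ hx => hx.2⟩)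
    fun _ hg _ hm => hm _ hg

lemma ordConnected_of_mem_extents_interordinalInc {n : ℕ} {S : Set (Fin n)}
    (hS : S ∈ Extents (interordinalInc n)) : S.OrdConnected := by
  refine ⟨fun x hx y hy z hz => ?_⟩
  rw [← hS] at hx hy ⊢
  rintro (c | c) hc
  · exact hz.2.trans (hy _ hc)
  · exact (hx _ hc).trans hz.1

lemma extents_interordinalInc {n : ℕ} (hn : 2 ≤ n) :
    Extents (interordinalInc n) = {S | S.OrdConnected} := by
  have : Nontrivial (Fin n) := Fin.nontrivial_iff_two_le.mpr hn
  ext S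
  refine ⟨ordConnected_of_mem_extents_interordinalInc, fun hS => ?_⟩
  obtain ⟨a, b, rfl⟩ := Set.OrdConnected.exists_eq_Icc hS
  exact interordinalInc_Icc_mem_extents a b

theorem stmt18_general {G M : Type*} (Inc : G → M → Prop)
    (H : Set G) {n : ℕ} (hn : 2 ≤ n)
    (σ : ↥H → Fin n) (hb : Function.Bijective σ)
    (h : IsLocalFullScaleMeasure Inc H (interordinalInc n) σ) :
    ∀ H' ⊆ H, ∀ k : ℕ, 2 ≤ k → H'.ncard = k →
      ∃ τ : ↥H' → Fin k, Function.Bijective τ ∧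
        IsLocalFullScaleMeasure Inc H' (interordinalInc k) τ := by
  intro H' hsub k hk hcard
  have : Nontrivial (Fin k) := Fin.nontrivial_iff_two_le.mpr hk
  obtain ⟨τ, e, hfactor⟩ := exists_equiv_fin_orderEmbedding (σ ∘ inclusion hsub)
    (hb.injective.comp (inclusion_injective hsub)) (by rw [Nat.card_coe_set_eq, hcard])
  have hrestrict := h.restrict hsub
  rw [show σ ∘ inclusion hsub = e ∘ τ from funext fun x => (hfactor x).symm] at hrestrict
  refine ⟨τ, τ.bijective, hrestrict.of_comp ?_⟩
  rw [extents_interordinalInc hn, extents_interordinalInc hk, e.image_preimage_ordConnected]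

/-- Heredity of local full scale-measures into interordinal scales. -/
theorem stmt18 {G M : Type*} [Finite G] [Finite M] (Inc : G → M → Prop)
    (H : Set G) {n : ℕ} (hn : 2 ≤ n) (hcard : H.ncard = n)
    (σ : ↥H → Fin n) (hb : Function.Bijective σ)
    (h : IsLocalFullScaleMeasure Inc H (interordinalInc n) σ) :
    ∀ H' ⊆ H, ∀ k : ℕ, 2 ≤ k → H'.ncard = k →
      ∃ τ : ↥H' → Fin k, Function.Bijective τ ∧
        IsLocalFullScaleMeasure Inc H' (interordinalInc k) τ :=
  stmt18_general Inc H hn σ hb h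
end
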